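/- Let $b_1, b_2 > 0$, $a_3 \in \mathbb{R}$ with $1 - a_3^2 b_2 > 0$, $r \in \mathbb{R}$, and let $u, v \in C^3([0,L])$ satisfy $u(0)=v(0)=u(L)=v(L)=u'(L)=v'(L)=0$. Then $\frac{b_2}{b_1}\int_0^L (-u''' - a_3 v''')\,u\,dx + \int_0^L \big(-\tfrac{r}{b_1}v' - \tfrac{b_2 a_3}{b_1}u''' - \tfrac{1}{b_1}v'''\big)\,v\,dx = -\frac{1}{2b_1}\big[b_2 u'(0)^2 + v'(0)^2 + 2a_3 b_2\,u'(0)v'(0)\big] \leq 0$. -/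

import Mathlib

/-!
The combined integrand is an exact derivative: for `d³` Lagrange's identity reads
`f''' g + f g''' = (f'' g - f' g' + f g'')'`, and `2 v' v = (v²)'`. Its antiderivative vanishes at
`L` by the boundary conditions and equals `(b₂ p² + 2 a₃ b₂ p q + q²) / (2 b₁)` at `0`, where
`p = u'(0)`, `q = v'(0)`. This quadratic form is `b₂ (p + a₃ q)² + (1 - a₃² b₂) q² ≥ 0`.
-/

open MeasureTheory Set

theorem integral_Ioo_const_mul_add {f g : ℝ → ℝ} {a b : ℝ} (c : ℝ)
    (hf : ContinuousOn f (Icc a b)) (hg : ContinuousOn g (Icc a b)) :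
    c * (∫ x in Ioo a b, f x) + ∫ x in Ioo a b, g x = ∫ x in Ioo a b, (c * f x + g x) := by
  rw [integral_add, integral_const_mul]
  · exact (hf.integrableOn_Icc.mono_set Ioo_subset_Icc_self).const_mul c
  · exact hg.integrableOn_Icc.mono_set Ioo_subset_Icc_self

theorem integral_Ioo_eq_sub_of_hasDerivAt {E : Type*} [NormedAddCommGroup E] [NormedSpace ℝ E]
    [CompleteSpace E] {F f : ℝ → E} {a b : ℝ} (hab : a ≤ b)
    (hF : ∀ x ∈ Icc a b, HasDerivAt F (f x) x) (hf : ContinuousOn f (Icc a b)) :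
    ∫ x in Ioo a b, f x = F b - F a := by
  rw [← integral_Ioc_eq_integral_Ioo, ← intervalIntegral.integral_of_le hab]
  rw [← uIcc_of_le hab] at hF hf
  exact intervalIntegral.integral_eq_sub_of_hasDerivAt hF hf.intervalIntegrable

def thirdOrderConcomitant (f f1 f2 g g1 g2 : ℝ → ℝ) (x : ℝ) : ℝ :=
  f2 x * g x - f1 x * g1 x + f x * g2 x

theorem hasDerivAt_thirdOrderConcomitant {f f1 f2 f3 g g1 g2 g3 : ℝ → ℝ} {x : ℝ}
    (hf1 : HasDerivAt f (f1 x) x) (hf2 : HasDerivAt f1 (f2 x) x) (hf3 : HasDerivAt f2 (f3 x) x)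
    (hg1 : HasDerivAt g (g1 x) x) (hg2 : HasDerivAt g1 (g2 x) x) (hg3 : HasDerivAt g2 (g3 x) x) :
    HasDerivAt (thirdOrderConcomitant f f1 f2 g g1 g2) (f3 x * g x + f x * g3 x) x :=
  (((hf3.mul hg1).sub (hf2.mul hg2)).add (hf1.mul hg3)).congr_deriv (by ring)

theorem gearGrimshaw_boundaryForm_nonneg {b2 a3 : ℝ} (hb2 : 0 ≤ b2) (ha3 : 0 ≤ 1 - a3 ^ 2 * b2)
    (p q : ℝ) : 0 ≤ b2 * p ^ 2 + q ^ 2 + 2 * a3 * b2 * p * q := by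
  have hsq : b2 * p ^ 2 + q ^ 2 + 2 * a3 * b2 * p * q
      = b2 * (p + a3 * q) ^ 2 + (1 - a3 ^ 2 * b2) * q ^ 2 := by ring
  rw [hsq]
  positivity

theorem linear_gear_grimshaw_dissipative
    (L b1 b2 a3 r : ℝ) (hL : 0 < L) (hb1 : 0 < b1) (hb2 : 0 < b2)
    (ha3 : 1 - a3 ^ 2 * b2 > 0)
    (u u1 u2 u3 v v1 v2 v3 : ℝ → ℝ)
    (hu1 : ∀ x ∈ Icc 0 L, HasDerivAt u (u1 x) x)
    (hu2 : ∀ x ∈ Icc 0 L, HasDerivAt u1 (u2 x) x)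
    (hu3 : ∀ x ∈ Icc 0 L, HasDerivAt u2 (u3 x) x)
    (hu3c : ContinuousOn u3 (Icc 0 L))
    (hv1 : ∀ x ∈ Icc 0 L, HasDerivAt v (v1 x) x)
    (hv2 : ∀ x ∈ Icc 0 L, HasDerivAt v1 (v2 x) x)
    (hv3 : ∀ x ∈ Icc 0 L, HasDerivAt v2 (v3 x) x)
    (hv3c : ContinuousOn v3 (Icc 0 L))
    (hu0 : u 0 = 0) (hv0 : v 0 = 0) (huL : u L = 0) (hvL : v L = 0)
    (hu1L : u1 L = 0) (hv1L : v1 L = 0) :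
    (b2 / b1) * (∫ x in Ioo 0 L, (-(u3 x) - a3 * v3 x) * u x) +
      (∫ x in Ioo 0 L,
        (-(r / b1) * v1 x - (b2 * a3 / b1) * u3 x - (1 / b1) * v3 x) * v x) =
      -(1 / (2 * b1)) *
        (b2 * (u1 0) ^ 2 + (v1 0) ^ 2 + 2 * a3 * b2 * u1 0 * v1 0) ∧
    -(1 / (2 * b1)) *
        (b2 * (u1 0) ^ 2 + (v1 0) ^ 2 + 2 * a3 * b2 * u1 0 * v1 0) ≤ 0 := by
  set f := fun x => (-(u3 x) - a3 * v3 x) * u x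
  set g := fun x => (-(r / b1) * v1 x - (b2 * a3 / b1) * u3 x - (1 / b1) * v3 x) * v x
  set F := fun x => -(1 / (2 * b1)) *
    (b2 * thirdOrderConcomitant u u1 u2 u u1 u2 x
      + 2 * a3 * b2 * thirdOrderConcomitant u u1 u2 v v1 v2 x
      + thirdOrderConcomitant v v1 v2 v v1 v2 x + r * v x ^ 2)
  have hF : ∀ x ∈ Icc 0 L, HasDerivAt F (b2 / b1 * f x + g x) x := fun x hx => by
    have huu := hasDerivAt_thirdOrderConcomitant
      (hu1 x hx) (hu2 x hx) (hu3 x hx) (hu1 x hx) (hu2 x hx) (hu3 x hx)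
    have huv := hasDerivAt_thirdOrderConcomitant
      (hu1 x hx) (hu2 x hx) (hu3 x hx) (hv1 x hx) (hv2 x hx) (hv3 x hx)
    have hvv := hasDerivAt_thirdOrderConcomitant
      (hv1 x hx) (hv2 x hx) (hv3 x hx) (hv1 x hx) (hv2 x hx) (hv3 x hx)
    refine ((((huu.const_mul b2).add (huv.const_mul (2 * a3 * b2))).add hvv).add
      (((hv1 x hx).pow 2).const_mul r) |>.const_mul _).congr_deriv ?_
    simp only [f, g]
    field_simp
    ring
  have huc : ContinuousOn u (Icc 0 L) := HasDerivAt.continuousOn hu1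
  have hvc : ContinuousOn v (Icc 0 L) := HasDerivAt.continuousOn hv1
  have hv1c : ContinuousOn v1 (Icc 0 L) := HasDerivAt.continuousOn hv2
  have hfc : ContinuousOn f (Icc 0 L) := by fun_prop
  have hgc : ContinuousOn g (Icc 0 L) := by fun_prop
  refine ⟨?_, ?_⟩
  · rw [integral_Ioo_const_mul_add _ hfc hgc,
      integral_Ioo_eq_sub_of_hasDerivAt hL.le hF (by fun_prop)]
    simp only [F, thirdOrderConcomitant, hu0, hv0, huL, hvL, hu1L, hv1L]
    ring
  · rw [neg_mul, neg_nonpos]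
    exact mul_nonneg (by positivity) (gearGrimshaw_boundaryForm_nonneg hb2.le ha3.le _ _)
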